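/- arXiv:1202.1797 — 2 statements merged into one kernel-verified Lean document; each statement's English description precedes it below -/
import Mathlib

section
/- Let n ≥ 2 and let N_1, …, N_n be closed subspaces of a complex Hilbert space H. If for every k with 2 ≤ k ≤ n the Friedrichs cosine satisfies c(M_k, N_k) < 1, where M_k denotes the closure of N_1 + ⋯ + N_{k−1}, then c(N_1, …, N_n) < 1. -/
/-- The Friedrichs cosine `c(M, N)` of two subspaces of a complex Hilbert space: the
supremum of `|⟪x, y⟫| / (‖x‖‖y‖)` over nonzero `x ∈ M ⊓ (M ⊓ N)ᗮ` and nonzero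
`y ∈ N ⊓ (M ⊓ N)ᗮ`, with `sSup ∅ = 0` by convention. -/
noncomputable def friedrichsCosine {H : Type*} [NormedAddCommGroup H] [InnerProductSpace ℂ H]
    (M N : Submodule ℂ H) : ℝ :=
  sSup {c : ℝ | ∃ x ∈ M ⊓ (M ⊓ N)ᗮ, ∃ y ∈ N ⊓ (M ⊓ N)ᗮ, x ≠ 0 ∧ y ≠ 0 ∧
    c = ‖(inner ℂ x y : ℂ)‖ / (‖x‖ * ‖y‖)}

/-- The cosine `c(N₁, …, Nₙ)` of a finite family of subspaces of a complex Hilbert space. -/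
noncomputable def cosine {H : Type*} [NormedAddCommGroup H] [InnerProductSpace ℂ H]
    {n : ℕ} (N : Fin n → Submodule ℂ H) : ℝ :=
  sSup {c : ℝ | ∃ x : Fin n → H,
    (∀ i, x i ∈ (N i)ᗮ ⊓ (∑ j, N j).topologicalClosure) ∧ x ≠ 0 ∧
    c = (1 / ((n : ℝ) - 1)) *
        (∑ i, ∑ j ∈ Finset.univ.erase i, ((inner ℂ (x i) (x j) : ℂ)).re) /
        (∑ i, ‖x i‖ ^ 2)}

/-!
Write `P_K` for the orthogonal projection onto `K`. For two closed subspaces with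
`c = c(M, N)`, every `u = m + y` with `m ∈ M`, `y ∈ N ⊖ (M ∩ N)` satisfies
`(1 - c)(‖m‖² + ‖y‖²) ≤ ‖u‖²`, and pairing `u` with `m` and `y` turns this into
`(1 - c)‖u‖² ≤ ‖P_M u‖² + ‖P_N u‖²` on the closure of `M + N`. Applying this to
`M = closure (N₁ + ⋯ + N_{k-1})` and `N = N_k` (and using `P_{N_i} P_M = P_{N_i}` for `i < k`),
induction on `k` gives `δ > 0` with `δ‖u‖² ≤ ∑ ‖P_{N_i} u‖²` on the closed span of all `N_i`.

For a tuple `xᵢ ∈ N_iᗮ` with sum `s` we have `P_{N_i} s = P_{N_i} (s - n xᵢ)`, hence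
`δ‖s‖² ≤ ∑ ‖s - n xᵢ‖² = n² ∑ ‖xᵢ‖² - n‖s‖²`. Since `∑_{i ≠ j} Re⟪xᵢ, xⱼ⟫ = ‖s‖² - ∑ ‖xᵢ‖²`,
the cosine is at most `(n² - n - δ) / ((n - 1)(n + δ)) < 1`.
-/

open Finset
open scoped InnerProductSpace

section

variable {H : Type*} [NormedAddCommGroup H] [InnerProductSpace ℂ H]

section FriedrichsCosine

variable (M N : Submodule ℂ H)

lemma friedrichsCosine_nonneg : 0 ≤ friedrichsCosine M N :=
  Real.sSup_nonneg <| by rintro _ ⟨x, -, y, -, -, -, rfl⟩; positivity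

lemma friedrichsCosine_le_one : friedrichsCosine M N ≤ 1 :=
  Real.sSup_le (by
    rintro _ ⟨x, -, y, -, -, -, rfl⟩
    exact div_le_one_of_le₀ (norm_inner_le_norm x y) (by positivity)) zero_le_one

lemma friedrichsCosine_bot_left : friedrichsCosine ⊥ N = 0 := by
  refine (congrArg sSup (Set.eq_empty_of_forall_notMem ?_)).trans Real.sSup_empty
  rintro _ ⟨x, hx, -, -, hx0, -⟩
  exact hx0 ((Submodule.mem_bot ℂ).1 hx.1)

lemma norm_inner_le_friedrichsCosine_mul {x y : H} (hx : x ∈ M ⊓ (M ⊓ N)ᗮ)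
    (hy : y ∈ N ⊓ (M ⊓ N)ᗮ) : ‖⟪x, y⟫_ℂ‖ ≤ friedrichsCosine M N * (‖x‖ * ‖y‖) := by
  rcases eq_or_ne x 0 with rfl | hx0
  · simp
  rcases eq_or_ne y 0 with rfl | hy0
  · simp
  have hbdd : BddAbove {c : ℝ | ∃ x ∈ M ⊓ (M ⊓ N)ᗮ, ∃ y ∈ N ⊓ (M ⊓ N)ᗮ, x ≠ 0 ∧ y ≠ 0 ∧
      c = ‖⟪x, y⟫_ℂ‖ / (‖x‖ * ‖y‖)} := by
    refine ⟨1, ?_⟩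
    rintro _ ⟨a, -, b, -, -, -, rfl⟩
    exact div_le_one_of_le₀ (norm_inner_le_norm a b) (by positivity)
  rw [← div_le_iff₀ (by positivity)]
  exact le_csSup hbdd ⟨x, hx, y, hy, hx0, hy0, rfl⟩

lemma norm_inner_le_friedrichsCosine_mul_of_mem_left [(M ⊓ N).HasOrthogonalProjection]
    {m y : H} (hm : m ∈ M) (hy : y ∈ N ⊓ (M ⊓ N)ᗮ) :
    ‖⟪m, y⟫_ℂ‖ ≤ friedrichsCosine M N * (‖m‖ * ‖y‖) := by
  set P := (M ⊓ N)ᗮ.starProjection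
  have hPm : P m ∈ M ⊓ (M ⊓ N)ᗮ := by
    refine ⟨?_, Submodule.starProjection_apply_mem _ m⟩
    rw [Submodule.starProjection_orthogonal_val]
    exact M.sub_mem hm (Submodule.mem_inf.1 ((M ⊓ N).starProjection_apply_mem m)).1
  have hPy : P y = y := Submodule.starProjection_eq_self_iff.2 hy.2
  calc ‖⟪m, y⟫_ℂ‖ = ‖⟪P m, y⟫_ℂ‖ := by
        rw [Submodule.inner_starProjection_left_eq_right, hPy]
    _ ≤ friedrichsCosine M N * (‖P m‖ * ‖y‖) := norm_inner_le_friedrichsCosine_mul M N hPm hy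
    _ ≤ friedrichsCosine M N * (‖m‖ * ‖y‖) := by
        have := friedrichsCosine_nonneg M N
        gcongr
        exact Submodule.norm_starProjection_apply_le _ m

lemma one_sub_friedrichsCosine_mul_le_norm_add_sq [(M ⊓ N).HasOrthogonalProjection]
    {m y : H} (hm : m ∈ M) (hy : y ∈ N ⊓ (M ⊓ N)ᗮ) :
    (1 - friedrichsCosine M N) * (‖m‖ ^ 2 + ‖y‖ ^ 2) ≤ ‖m + y‖ ^ 2 := by
  have hinner := norm_inner_le_friedrichsCosine_mul_of_mem_left M N hm hy
  have hre := neg_le_of_abs_le (RCLike.abs_re_le_norm ⟪m, y⟫_ℂ)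
  have := friedrichsCosine_nonneg M N
  rw [@norm_add_sq ℂ]
  nlinarith [sq_nonneg (‖m‖ - ‖y‖)]

variable [M.HasOrthogonalProjection] [N.HasOrthogonalProjection] [(M ⊓ N).HasOrthogonalProjection]

lemma one_sub_friedrichsCosine_mul_le_of_mem_sup {u : H} (hu : u ∈ M ⊔ N) :
    (1 - friedrichsCosine M N) * ‖u‖ ^ 2 ≤
      ‖M.starProjection u‖ ^ 2 + ‖N.starProjection u‖ ^ 2 := by
  obtain ⟨m₀, hm₀, n₀, hn₀, rfl⟩ := Submodule.mem_sup.1 hu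
  set K := M ⊓ N
  set m := m₀ + K.starProjection n₀
  set y := n₀ - K.starProjection n₀
  have hPn₀ := Submodule.mem_inf.1 (K.starProjection_apply_mem n₀)
  have hm : m ∈ M := M.add_mem hm₀ hPn₀.1
  have hy : y ∈ N ⊓ Kᗮ := ⟨N.sub_mem hn₀ hPn₀.2, K.sub_starProjection_mem_orthogonal n₀⟩
  set u := m₀ + n₀
  have hdecomp : u = m + y := by simp only [u, m, y]; abel
  have hinner {L : Submodule ℂ H} [L.HasOrthogonalProjection] {v : H} (hv : v ∈ L) :
      (⟪u, v⟫_ℂ).re ≤ ‖L.starProjection u‖ * ‖v‖ := by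
    rw [← Submodule.starProjection_eq_self_iff.2 hv, ← Submodule.inner_starProjection_left_eq_right,
      Submodule.starProjection_eq_self_iff.2 hv]
    exact (Complex.re_le_norm _).trans (norm_inner_le_norm _ _)
  have hsplit : ‖u‖ ^ 2 ≤ ‖M.starProjection u‖ * ‖m‖ + ‖N.starProjection u‖ * ‖y‖ := by
    have : ‖u‖ ^ 2 = (⟪u, m⟫_ℂ).re + (⟪u, y⟫_ℂ).re := by
      rw [← Complex.add_re, ← inner_add_right, ← hdecomp, ← RCLike.re_to_complex,
        inner_self_eq_norm_sq]
    linarith [hinner hm, hinner hy.1]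
  have hcoer := one_sub_friedrichsCosine_mul_le_norm_add_sq M N hm hy
  rw [← hdecomp] at hcoer
  have ht := sub_nonneg.2 (friedrichsCosine_le_one M N)
  -- with `t = 1 - c`, `a = ‖P_M u‖`, `p = ‖m‖` etc. and AM-GM `2tap ≤ a² + t²p²`:
  -- `2t‖u‖² ≤ 2t(ap + bq) ≤ a² + b² + t²(p² + q²) ≤ a² + b² + t‖u‖²`
  nlinarith [sq_nonneg (‖M.starProjection u‖ - (1 - friedrichsCosine M N) * ‖m‖),
    sq_nonneg (‖N.starProjection u‖ - (1 - friedrichsCosine M N) * ‖y‖),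
    mul_le_mul_of_nonneg_left hsplit ht, mul_le_mul_of_nonneg_left hcoer ht]

lemma one_sub_friedrichsCosine_mul_le_of_mem_topologicalClosure_sup {u : H}
    (hu : u ∈ (M ⊔ N).topologicalClosure) :
    (1 - friedrichsCosine M N) * ‖u‖ ^ 2 ≤
      ‖M.starProjection u‖ ^ 2 + ‖N.starProjection u‖ ^ 2 :=
  closure_minimal (fun _ hv => one_sub_friedrichsCosine_mul_le_of_mem_sup M N hv)
    (isClosed_le (f := fun v => (1 - friedrichsCosine M N) * ‖v‖ ^ 2)
      (g := fun v => ‖M.starProjection v‖ ^ 2 + ‖N.starProjection v‖ ^ 2)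
      (by fun_prop) (by fun_prop)) hu

end FriedrichsCosine

section LowerProjectionBound

variable {ι : Type*} (N : ι → Submodule ℂ H) [∀ i, (N i).HasOrthogonalProjection]

def HasLowerProjectionBound (s : Finset ι) : Prop :=
  ∃ δ > 0, ∀ u ∈ (∑ i ∈ s, N i).topologicalClosure,
    δ * ‖u‖ ^ 2 ≤ ∑ i ∈ s, ‖(N i).starProjection u‖ ^ 2

lemma hasLowerProjectionBound_empty : HasLowerProjectionBound N ∅ :=
  ⟨1, one_pos, fun u hu => by simp_all⟩

variable {N}

lemma HasLowerProjectionBound.insert [CompleteSpace H] [DecidableEq ι] {s : Finset ι} {j : ι}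
    (hj : j ∉ s) (hs : HasLowerProjectionBound N s)
    (hc : friedrichsCosine (∑ i ∈ s, N i).topologicalClosure (N j) < 1) :
    HasLowerProjectionBound N (insert j s) := by
  have hNj : IsClosed (N j : Set H) := by
    rw [← (N j).orthogonal_orthogonal]
    exact (N j)ᗮ.isClosed_orthogonal
  obtain ⟨δ, hδ, hbound⟩ := hs
  set M := (∑ i ∈ s, N i).topologicalClosure
  set c := friedrichsCosine M (N j)
  have hclosed : IsClosed (↑(M ⊓ N j) : Set H) := by
    rw [Submodule.coe_inf]
    exact (∑ i ∈ s, N i).isClosed_topologicalClosure.inter hNj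
  have := hclosed.completeSpace_coe
  refine ⟨min δ 1 * (1 - c), mul_pos (lt_min hδ one_pos) (sub_pos.2 hc), fun u hu => ?_⟩
  have huM : u ∈ (M ⊔ N j).topologicalClosure := by
    refine Submodule.topologicalClosure_mono ?_ hu
    rw [sum_insert hj, Submodule.add_eq_sup, sup_comm]
    exact sup_le_sup_right (Submodule.le_topologicalClosure _) _
  have hPM : δ * ‖M.starProjection u‖ ^ 2 ≤ ∑ i ∈ s, ‖(N i).starProjection u‖ ^ 2 := by
    refine (hbound _ (M.starProjection_apply_mem u)).trans_eq (sum_congr rfl fun i hi => ?_)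
    have hNi : N i ≤ M :=
      (single_le_sum (fun _ _ => bot_le) hi).trans (∑ i ∈ s, N i).le_topologicalClosure
    rw [← ContinuousLinearMap.comp_apply, Submodule.starProjection_comp_starProjection_of_le hNi]
  have htwo := one_sub_friedrichsCosine_mul_le_of_mem_topologicalClosure_sup M (N j) huM
  rw [sum_insert hj]
  calc min δ 1 * (1 - c) * ‖u‖ ^ 2
      ≤ min δ 1 * (‖M.starProjection u‖ ^ 2 + ‖(N j).starProjection u‖ ^ 2) := by
        rw [mul_assoc]; gcongr
    _ ≤ δ * ‖M.starProjection u‖ ^ 2 + 1 * ‖(N j).starProjection u‖ ^ 2 := by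
        rw [mul_add]; gcongr; exacts [min_le_left _ _, min_le_right _ _]
    _ ≤ ‖(N j).starProjection u‖ ^ 2 + ∑ i ∈ s, ‖(N i).starProjection u‖ ^ 2 := by
        linarith

end LowerProjectionBound

lemma hasLowerProjectionBound_univ_of_friedrichsCosine_lt_one [CompleteSpace H] {n : ℕ}
    {N : Fin n → Submodule ℂ H} [∀ i, (N i).HasOrthogonalProjection]
    (h : ∀ k : Fin n, 0 < (k : ℕ) →
      friedrichsCosine ((∑ i ∈ univ.filter (· < k), N i).topologicalClosure) (N k) < 1) :
    HasLowerProjectionBound N univ := by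
  suffices ∀ k ≤ n, HasLowerProjectionBound N (univ.filter fun i : Fin n => (i : ℕ) < k) by
    simpa using this n le_rfl
  intro k
  induction k with
  | zero => intro _; simpa using hasLowerProjectionBound_empty N
  | succ k ih =>
    intro hk
    set j : Fin n := ⟨k, hk⟩
    have hfilter : univ.filter (fun i : Fin n => (i : ℕ) < k + 1) =
        insert j (univ.filter fun i : Fin n => (i : ℕ) < k) := by
      ext i; simp only [mem_filter, mem_univ, true_and, mem_insert, Fin.ext_iff, j]; omega
    rw [hfilter]
    refine (ih (by omega)).insert (by simp [j]) ?_
    rcases Nat.eq_zero_or_pos k with rfl | hk0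
    · simp [friedrichsCosine_bot_left]
    · exact h j hk0

section Cosine

variable {ι : Type*} [Fintype ι]

lemma sum_sum_erase_re_inner [DecidableEq ι] (x : ι → H) :
    ∑ i, ∑ j ∈ univ.erase i, (⟪x i, x j⟫_ℂ).re = ‖∑ i, x i‖ ^ 2 - ∑ i, ‖x i‖ ^ 2 := by
  have hdiag (i : ι) : ∑ j ∈ univ.erase i, (⟪x i, x j⟫_ℂ).re =
      ∑ j, (⟪x i, x j⟫_ℂ).re - ‖x i‖ ^ 2 := by
    rw [← sum_erase_add _ _ (mem_univ i), ← @inner_self_eq_norm_sq ℂ, RCLike.re_to_complex]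
    ring
  rw [sum_congr rfl fun i _ => hdiag i, sum_sub_distrib, ← @inner_self_eq_norm_sq ℂ,
    RCLike.re_to_complex, sum_inner]
  simp only [inner_sum, Complex.re_sum]

lemma sum_norm_sum_sub_card_smul_sq (x : ι → H) :
    ∑ i, ‖∑ j, x j - (Fintype.card ι : ℂ) • x i‖ ^ 2 =
      Fintype.card ι ^ 2 * ∑ i, ‖x i‖ ^ 2 - Fintype.card ι * ‖∑ i, x i‖ ^ 2 := by
  have hsum : ∑ i, (⟪∑ j, x j, x i⟫_ℂ).re = ‖∑ j, x j‖ ^ 2 := by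
    rw [← Complex.re_sum, ← inner_sum, ← RCLike.re_to_complex, inner_self_eq_norm_sq]
  simp only [@norm_sub_sq ℂ, norm_smul, inner_smul_right, sum_add_distrib, sum_sub_distrib,
    mul_pow]
  simp only [sum_const, card_univ, nsmul_eq_mul, RCLike.mul_re, RCLike.natCast_re,
    RCLike.re_to_complex, RCLike.natCast_im, RCLike.im_to_complex, zero_mul, sub_zero, ← mul_sum,
    hsum, RCLike.norm_natCast]
  ring

lemma card_add_mul_norm_sum_sq_le {N : ι → Submodule ℂ H} [∀ i, (N i).HasOrthogonalProjection]
    {δ : ℝ}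
    (hδ : ∀ u ∈ (∑ i, N i).topologicalClosure, δ * ‖u‖ ^ 2 ≤ ∑ i, ‖(N i).starProjection u‖ ^ 2)
    {x : ι → H} (hx : ∀ i, x i ∈ (N i)ᗮ ⊓ (∑ j, N j).topologicalClosure) :
    (Fintype.card ι + δ) * ‖∑ i, x i‖ ^ 2 ≤ Fintype.card ι ^ 2 * ∑ i, ‖x i‖ ^ 2 := by
  set s := ∑ i, x i
  have hs : s ∈ (∑ j, N j).topologicalClosure := sum_mem fun i _ => (hx i).2
  have hproj (i : ι) : ‖(N i).starProjection s‖ ≤ ‖s - (Fintype.card ι : ℂ) • x i‖ := by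
    have hxi : (N i).starProjection (x i) = 0 :=
      (Submodule.starProjection_apply_eq_zero_iff _).2 (hx i).1
    calc ‖(N i).starProjection s‖ = ‖(N i).starProjection (s - (Fintype.card ι : ℂ) • x i)‖ := by
          rw [map_sub, map_smul, hxi, smul_zero, sub_zero]
      _ ≤ _ := Submodule.norm_starProjection_apply_le _ _
  have := calc δ * ‖s‖ ^ 2 ≤ ∑ i, ‖(N i).starProjection s‖ ^ 2 := hδ s hs
    _ ≤ ∑ i, ‖s - (Fintype.card ι : ℂ) • x i‖ ^ 2 := by gcongr with i; exact hproj i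
    _ = Fintype.card ι ^ 2 * ∑ i, ‖x i‖ ^ 2 - Fintype.card ι * ‖s‖ ^ 2 :=
        sum_norm_sum_sub_card_smul_sq x
  linarith

theorem HasLowerProjectionBound.cosine_lt_one {n : ℕ} (hn : 2 ≤ n) {N : Fin n → Submodule ℂ H}
    [∀ i, (N i).HasOrthogonalProjection] (h : HasLowerProjectionBound N univ) :
    cosine N < 1 := by
  obtain ⟨δ, hδ, hbound⟩ := h
  have hn' : (2 : ℝ) ≤ n := by exact_mod_cast hn
  set B : ℝ := (n ^ 2 - n - δ) / ((n - 1) * (n + δ))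
  have hB : B < 1 := by
    rw [div_lt_one (by nlinarith)]
    nlinarith
  refine (Real.sSup_le ?_ (le_max_right B 0)).trans_lt (max_lt hB one_pos)
  rintro _ ⟨x, hx, hx0, rfl⟩
  refine le_max_of_le_left ?_
  obtain ⟨i, hi⟩ := Function.ne_iff.1 hx0
  have hQ : 0 < ∑ i, ‖x i‖ ^ 2 :=
    sum_pos' (fun _ _ => by positivity) ⟨i, mem_univ i, by simpa [sq_pos_iff] using hi⟩
  have key := card_add_mul_norm_sum_sq_le hbound hx
  rw [Fintype.card_fin] at key
  rw [sum_sum_erase_re_inner]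
  rw [one_div_mul_eq_div, div_div, div_le_div_iff₀ (by nlinarith) (by nlinarith)]
  nlinarith

end Cosine

end

/-- If, for every `k` with `2 ≤ k ≤ n` (here: `k : Fin n` with `0 < k`),
the Friedrichs cosine of the closure of `N₁ + ⋯ + N_{k−1}` and `N_k` is `< 1`, then
`c(N₁, …, Nₙ) < 1`. -/
theorem stmt_6 {H : Type*} [NormedAddCommGroup H] [InnerProductSpace ℂ H] [CompleteSpace H]
    {n : ℕ} (hn : 2 ≤ n) (N : Fin n → Submodule ℂ H)
    (hNc : ∀ i, IsClosed ((N i : Set H)))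
    (h : ∀ k : Fin n, 0 < (k : ℕ) →
      friedrichsCosine
        ((∑ i ∈ Finset.univ.filter (fun i => i < k), N i).topologicalClosure) (N k) < 1) :
    cosine N < 1 := by
  have : ∀ i, CompleteSpace (N i) := fun i => (hNc i).completeSpace_coe
  exact (hasLowerProjectionBound_univ_of_friedrichsCosine_lt_one h).cosine_lt_one hn
end

section
/- Let n ≥ 2 and let N_1, …, N_n be closed subspaces of a complex Hilbert space H, and let N denote the closure of N_1 + ⋯ + N_n. Let P_{N_1^⊥}, …, P_{N_n^⊥} denote the orthogonal projections onto the orthogonal complements N_1^⊥, …, N_n^⊥, and let P_N denote the orthogonal projection onto N. Then c(N_1, …, N_n) < 1 if and only if ‖P_{N_1^⊥} P_{N_2^⊥} ⋯ P_{N_n^⊥} P_N‖ < 1 in the operator norm. -/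
open Finset

theorem add_sq_le_succ_mul {a b k X : ℝ} (hk : 0 ≤ k) (hX : 0 ≤ X) (h : a ^ 2 ≤ k * X) :
    (a + b) ^ 2 ≤ (k + 1) * (X + b ^ 2) := by
  rcases hk.eq_or_lt with rfl | hk
  · nlinarith
  · -- `k ((k + 1) (X + b²) - (a + b)²) = (a - k b)² + (k + 1) (k X - a²)`
    nlinarith [sq_nonneg (a - k * b)]

section InnerProductSpace

variable {𝕜 E : Type*} [RCLike 𝕜] [NormedAddCommGroup E] [InnerProductSpace 𝕜 E]

theorem ContinuousLinearMap.norm_lt_one_of_norm_sq_apply_le {F : Type*} [NormedAddCommGroup F]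
    [NormedSpace 𝕜 F] (T : E →L[𝕜] F) {c : ℝ} (hc : c < 1)
    (h : ∀ z, ‖T z‖ ^ 2 ≤ c * ‖z‖ ^ 2) : ‖T‖ < 1 := by
  refine (T.opNorm_le_bound (Real.sqrt_nonneg c) fun z => ?_).trans_lt ?_
  · rw [← Real.sqrt_sq (norm_nonneg (T z)), ← Real.sqrt_sq (norm_nonneg z),
      ← Real.sqrt_mul' _ (sq_nonneg _)]
    exact Real.sqrt_le_sqrt (h z)
  · rwa [Real.sqrt_lt' one_pos, one_pow]

theorem Submodule.norm_sub_starProjection_le (K : Submodule 𝕜 E) [K.HasOrthogonalProjection]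
    (v : E) {w : E} (hw : w ∈ K) : ‖v - K.starProjection v‖ ≤ ‖v - w‖ := by
  rw [starProjection_minimal]
  exact ciInf_le ⟨0, Set.forall_mem_range.mpr fun _ => norm_nonneg _⟩ (⟨w, hw⟩ : K)

theorem Submodule.norm_sq_starProjection_add_norm_sq_sub (K : Submodule 𝕜 E)
    [K.HasOrthogonalProjection] (v : E) :
    ‖K.starProjection v‖ ^ 2 + ‖v - K.starProjection v‖ ^ 2 = ‖v‖ ^ 2 := by
  rw [norm_sq_eq_add_norm_sq_starProjection v K, starProjection_orthogonal_val]

theorem norm_sum_sq_eq_sum_norm_sq_add {ι : Type*} [Fintype ι] [DecidableEq ι] (x : ι → E) :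
    ‖∑ i, x i‖ ^ 2 =
      ∑ i, ‖x i‖ ^ 2 + ∑ i, ∑ j ∈ univ.erase i, RCLike.re (inner 𝕜 (x i) (x j)) := by
  rw [← inner_self_eq_norm_sq (𝕜 := 𝕜), sum_inner, map_sum, ← sum_add_distrib]
  refine sum_congr rfl fun i _ => ?_
  rw [inner_sum, map_sum, ← add_sum_erase _ _ (mem_univ i), inner_self_eq_norm_sq]

theorem sum_norm_sq_pos {ι : Type*} [Fintype ι] {x : ι → E} (hx : x ≠ 0) :
    0 < ∑ i, ‖x i‖ ^ 2 := by
  obtain ⟨i, hi⟩ := Function.ne_iff.mp hx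
  exact sum_pos' (fun _ _ => by positivity) ⟨i, mem_univ i, pow_pos (norm_pos_iff.mpr hi) 2⟩

variable (𝕜) in
/-- `n² ∑ᵢ ‖xᵢ - x̄‖²`, the spread of the `n` vectors `xᵢ` around their mean `x̄`. -/
noncomputable def dispersion {ι : Type*} [Fintype ι] (x : ι → E) : ℝ :=
  ∑ i, ‖∑ j, x j - (Fintype.card ι : 𝕜) • x i‖ ^ 2

section Dispersion

variable {ι : Type*} [Fintype ι]

theorem dispersion_nonneg (x : ι → E) : 0 ≤ dispersion 𝕜 x :=
  sum_nonneg fun _ _ => sq_nonneg _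

theorem dispersion_eq (x : ι → E) :
    dispersion 𝕜 x =
      Fintype.card ι ^ 2 * ∑ i, ‖x i‖ ^ 2 - Fintype.card ι * ‖∑ i, x i‖ ^ 2 := by
  have hσ : ∑ i, RCLike.re (inner 𝕜 (∑ j, x j) (x i)) = ‖∑ j, x j‖ ^ 2 := by
    rw [← map_sum, ← inner_sum, inner_self_eq_norm_sq]
  simp only [dispersion, norm_sub_sq (𝕜 := 𝕜), inner_smul_right, norm_smul, RCLike.norm_natCast,
    sum_add_distrib, sum_sub_distrib, sum_const, card_univ, nsmul_eq_mul, mul_pow, ← mul_sum,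
    RCLike.mul_re, RCLike.natCast_re, RCLike.natCast_im, zero_mul, sub_zero, hσ]
  ring

theorem dispersion_le (x : ι → E) : dispersion 𝕜 x ≤ Fintype.card ι ^ 2 * ∑ i, ‖x i‖ ^ 2 := by
  rw [dispersion_eq]
  have : (0 : ℝ) ≤ Fintype.card ι * ‖∑ i, x i‖ ^ 2 := by positivity
  linarith

theorem dispersion_const_sub (z : E) (e : ι → E) :
    dispersion 𝕜 (fun i => z - e i) = dispersion 𝕜 e := by
  refine sum_congr rfl fun i _ => ?_
  rw [← norm_neg]
  congr 2
  simp only [sum_sub_distrib, sum_const, card_univ, ← Nat.cast_smul_eq_nsmul 𝕜, smul_sub]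
  abel

end Dispersion

def JointlyBoundedBelow {ι : Type*} [Fintype ι] (P : ι → E →L[𝕜] E) (M : Submodule 𝕜 E) :
    Prop :=
  ∃ δ > 0, ∀ z ∈ M, δ * ‖z‖ ^ 2 ≤ ∑ i, ‖z - P i z‖ ^ 2

section Subspaces

variable {ι : Type*} [Fintype ι] {U : ι → Submodule 𝕜 E} [∀ i, (U i).HasOrthogonalProjection]
  {M : Submodule 𝕜 E}

theorem mul_sum_norm_sq_le_dispersion {δ : ℝ}
    (hM : ∀ z ∈ M, δ * ‖z‖ ^ 2 ≤ ∑ i, ‖z - (U i).starProjection z‖ ^ 2)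
    {x : ι → E} (hx : ∀ i, x i ∈ U i ⊓ M) :
    δ * Fintype.card ι ^ 2 * ∑ i, ‖x i‖ ^ 2 ≤ (Fintype.card ι + δ) * dispersion 𝕜 x := by
  have hσ : δ * ‖∑ j, x j‖ ^ 2 ≤ dispersion 𝕜 x :=
    (hM _ (sum_mem fun i _ => (hx i).2)).trans <| sum_le_sum fun i _ => by
      gcongr
      exact (U i).norm_sub_starProjection_le _ (Submodule.smul_mem _ _ (hx i).1)
  have hnσ := mul_le_mul_of_nonneg_left hσ (Nat.cast_nonneg (α := ℝ) (Fintype.card ι))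
  linear_combination hnσ - δ * dispersion_eq (𝕜 := 𝕜) x

theorem mul_norm_sq_le_sum_norm_sub_starProjection_sq {c : ℝ} (hUM : ∀ i, (U i)ᗮ ≤ M)
    (hc : ∀ x : ι → E, (∀ i, x i ∈ U i ⊓ M) → c * ∑ i, ‖x i‖ ^ 2 ≤ dispersion 𝕜 x)
    {z : E} (hz : z ∈ M) :
    c * Fintype.card ι * ‖z‖ ^ 2 ≤
      (Fintype.card ι ^ 2 + c) * ∑ i, ‖z - (U i).starProjection z‖ ^ 2 := by
  have hx : ∀ i, (U i).starProjection z ∈ U i ⊓ M := fun i =>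
    ⟨(U i).starProjection_apply_mem z, by
      simpa using sub_mem hz (hUM i ((U i).sub_starProjection_mem_orthogonal z))⟩
  have hdisp : dispersion 𝕜 (fun i => (U i).starProjection z) ≤
      Fintype.card ι ^ 2 * ∑ i, ‖z - (U i).starProjection z‖ ^ 2 := by
    simpa [dispersion_const_sub] using
      dispersion_le (𝕜 := 𝕜) fun i => z - (U i).starProjection z
  have hpyth : ∑ i, ‖(U i).starProjection z‖ ^ 2 + ∑ i, ‖z - (U i).starProjection z‖ ^ 2 =
      Fintype.card ι * ‖z‖ ^ 2 := by
    simp [← sum_add_distrib, Submodule.norm_sq_starProjection_add_norm_sq_sub]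
  linear_combination hc _ hx + hdisp - c * hpyth

end Subspaces

theorem norm_sub_list_prod_apply_le {l : List (E →L[𝕜] E)} (hl : ∀ p ∈ l, ‖p‖ ≤ 1) (u : E) :
    ‖u - l.prod u‖ ≤ (l.map fun p => ‖u - p u‖).sum := by
  induction l with
  | nil => simp
  | cons q t ih =>
    have hq := hl q List.mem_cons_self
    calc ‖u - (q :: t).prod u‖ = ‖(u - q u) + q (u - t.prod u)‖ := by
          simp only [List.prod_cons, mul_apply_eq_comp, map_sub]; abel_nf
      _ ≤ ‖u - q u‖ + ‖u - t.prod u‖ :=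
          norm_add_le_of_le le_rfl (q.le_of_opNorm_le hq _ |>.trans (one_mul _).le)
      _ ≤ ((q :: t).map fun p => ‖u - p u‖).sum := by
          simpa using ih fun p hp => hl p (List.mem_cons_of_mem q hp)

theorem norm_list_prod_apply_le {l : List (E →L[𝕜] E)} (hl : ∀ p ∈ l, ‖p‖ ≤ 1) (u : E) :
    ‖l.prod u‖ ≤ ‖u‖ := by
  induction l generalizing u with
  | nil => simp
  | cons q t ih =>
    rw [List.prod_cons, mul_apply_eq_comp]
    exact (q.le_of_opNorm_le (hl q List.mem_cons_self) _).trans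
      ((one_mul _).trans_le (ih (fun p hp => hl p (List.mem_cons_of_mem q hp)) u))

theorem jointlyBoundedBelow_of_norm_prod_mul_starProjection_lt_one {n : ℕ} (hn : 0 < n)
    {P : Fin n → E →L[𝕜] E} (hP : ∀ i, ‖P i‖ ≤ 1) (K : Submodule 𝕜 E)
    [K.HasOrthogonalProjection] (hT : ‖(List.ofFn P).prod * K.starProjection‖ < 1) :
    JointlyBoundedBelow P K := by
  set T := (List.ofFn P).prod * K.starProjection
  have hT1 : 0 < 1 - ‖T‖ := by linarith
  refine ⟨(1 - ‖T‖) ^ 2 / n, by positivity, fun z hz => ?_⟩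
  have hTz : T z = (List.ofFn P).prod z := by
    rw [mul_apply_eq_comp, K.starProjection_eq_self_iff.mpr hz]
  have hsub : ‖z - T z‖ ≤ ∑ i, ‖z - P i z‖ := by
    simpa [hTz, List.map_ofFn, List.sum_ofFn] using
      norm_sub_list_prod_apply_le (l := List.ofFn P) (by simpa [List.mem_ofFn] using hP) z
  have hlow : (1 - ‖T‖) * ‖z‖ ≤ ∑ i, ‖z - P i z‖ := by
    linarith [T.le_opNorm z, norm_sub_norm_le z (T z)]
  rw [div_mul_eq_mul_div, div_le_iff₀ (by exact_mod_cast hn)]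
  calc (1 - ‖T‖) ^ 2 * ‖z‖ ^ 2 = ((1 - ‖T‖) * ‖z‖) ^ 2 := by ring
    _ ≤ (∑ i, ‖z - P i z‖) ^ 2 := by gcongr
    _ ≤ _ := by
        simpa [mul_comm] using sq_sum_le_card_mul_sum_sq (s := univ) (f := fun i => ‖z - P i z‖)

variable [CompleteSpace E]

theorem IsStarProjection.eq_starProjection_of_range_eq {p : E →L[𝕜] E} (hp : IsStarProjection p)
    {K : Submodule 𝕜 E} [K.HasOrthogonalProjection] (h : LinearMap.range (p : E →ₗ[𝕜] E) = K) :
    p = K.starProjection := by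
  subst h
  obtain ⟨_, hp⟩ := isStarProjection_iff_eq_starProjection_range.mp hp
  exact hp

theorem IsStarProjection.norm_sq_apply_add_norm_sq_sub {p : E →L[𝕜] E} (hp : IsStarProjection p)
    (v : E) : ‖p v‖ ^ 2 + ‖v - p v‖ ^ 2 = ‖v‖ ^ 2 := by
  obtain ⟨K, _, rfl⟩ := isStarProjection_iff_eq_starProjection.mp hp
  exact K.norm_sq_starProjection_add_norm_sq_sub v

theorem norm_sub_list_prod_apply_sq_le {l : List (E →L[𝕜] E)} (hl : ∀ p ∈ l, IsStarProjection p)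
    (u : E) : ‖u - l.prod u‖ ^ 2 ≤ l.length * (‖u‖ ^ 2 - ‖l.prod u‖ ^ 2) := by
  induction l with
  | nil => simp
  | cons q t ih =>
    have ht : ∀ p ∈ t, IsStarProjection p := fun p hp => hl p (List.mem_cons_of_mem q hp)
    simp only [List.prod_cons, mul_apply_eq_comp, List.length_cons, Nat.cast_succ]
    set w := t.prod u
    have hpyth := (hl q List.mem_cons_self).norm_sq_apply_add_norm_sq_sub w
    have hw : ‖w‖ ≤ ‖u‖ := norm_list_prod_apply_le (fun p hp => (ht p hp).norm_le) u
    calc ‖u - q w‖ ^ 2 ≤ (‖u - w‖ + ‖w - q w‖) ^ 2 := by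
          gcongr; exact norm_sub_le_norm_sub_add_norm_sub _ _ _
      _ ≤ (t.length + 1) * ((‖u‖ ^ 2 - ‖w‖ ^ 2) + ‖w - q w‖ ^ 2) :=
          add_sq_le_succ_mul (Nat.cast_nonneg _) (by nlinarith [norm_nonneg w]) (ih ht)
      _ = (t.length + 1) * (‖u‖ ^ 2 - ‖q w‖ ^ 2) := by rw [← hpyth]; ring

theorem norm_sub_apply_sq_le_of_mem {l : List (E →L[𝕜] E)} (hl : ∀ p ∈ l, IsStarProjection p)
    {p : E →L[𝕜] E} (hp : p ∈ l) (u : E) :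
    ‖u - p u‖ ^ 2 ≤ l.length * (‖u‖ ^ 2 - ‖l.prod u‖ ^ 2) := by
  obtain ⟨a, b, rfl⟩ := List.append_of_mem hp
  have hb : ∀ q ∈ p :: b, IsStarProjection q := fun q hq => hl q (by simp_all)
  have ha : ∀ q ∈ a, ‖q‖ ≤ 1 := fun q hq => (hl q (by simp_all)).norm_le
  set v := (p :: b).prod u
  have hdist : ‖u - p u‖ ≤ ‖u - v‖ := by
    obtain ⟨K, _, rfl⟩ := isStarProjection_iff_eq_starProjection.mp (hb p List.mem_cons_self)
    exact K.norm_sub_starProjection_le u (by simp [v, K.starProjection_apply_mem])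
  have hprod : ‖(a ++ p :: b).prod u‖ ≤ ‖v‖ := by
    rw [List.prod_append, mul_apply_eq_comp]
    exact norm_list_prod_apply_le ha v
  have hv : ‖v‖ ≤ ‖u‖ := norm_list_prod_apply_le (fun q hq => (hb q hq).norm_le) u
  have hlen : ((p :: b).length : ℝ) ≤ (a ++ p :: b).length := by simp
  calc ‖u - p u‖ ^ 2 ≤ ‖u - v‖ ^ 2 := by gcongr
    _ ≤ (p :: b).length * (‖u‖ ^ 2 - ‖v‖ ^ 2) := norm_sub_list_prod_apply_sq_le hb u
    _ ≤ (a ++ p :: b).length * (‖u‖ ^ 2 - ‖(a ++ p :: b).prod u‖ ^ 2) := by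
        have : 0 ≤ ‖u‖ ^ 2 - ‖v‖ ^ 2 := by nlinarith [norm_nonneg v]
        gcongr

section ProductOfProjections

variable {n : ℕ} {P : Fin n → E →L[𝕜] E} (K : Submodule 𝕜 E) [K.HasOrthogonalProjection]

theorem norm_prod_mul_starProjection_lt_one (hP : ∀ i, IsStarProjection (P i))
    (hPK : JointlyBoundedBelow P K) : ‖(List.ofFn P).prod * K.starProjection‖ < 1 := by
  obtain ⟨δ, hδ, hK⟩ := hPK
  have hl : ∀ p ∈ List.ofFn P, IsStarProjection p := by
    simp only [List.mem_ofFn]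
    rintro _ ⟨i, rfl⟩
    exact hP i
  refine ContinuousLinearMap.norm_lt_one_of_norm_sq_apply_le _
    (c := n ^ 2 / (n ^ 2 + δ)) ((div_lt_one (by positivity)).mpr (by linarith)) fun z => ?_
  set u := K.starProjection z
  set L := (List.ofFn P).prod
  have hLu : ‖L u‖ ^ 2 ≤ ‖u‖ ^ 2 := by
    gcongr
    exact norm_list_prod_apply_le (fun p hp => (hl p hp).norm_le) u
  have hu : ‖u‖ ^ 2 ≤ ‖z‖ ^ 2 := by
    gcongr
    exact K.norm_starProjection_apply_le z
  have hloss : δ * ‖u‖ ^ 2 ≤ n ^ 2 * (‖u‖ ^ 2 - ‖L u‖ ^ 2) :=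
    calc δ * ‖u‖ ^ 2 ≤ ∑ i, ‖u - P i u‖ ^ 2 := hK u (K.starProjection_apply_mem z)
      _ ≤ ∑ _i : Fin n, n * (‖u‖ ^ 2 - ‖L u‖ ^ 2) := by
          gcongr with i
          simpa using norm_sub_apply_sq_le_of_mem hl (List.mem_ofFn.mpr ⟨i, rfl⟩) u
      _ = n ^ 2 * (‖u‖ ^ 2 - ‖L u‖ ^ 2) := by
          simp only [sum_const, card_univ, Fintype.card_fin, nsmul_eq_mul]; ring
  rw [mul_apply_eq_comp, div_mul_eq_mul_div, le_div_iff₀ (by positivity)]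
  change ‖L u‖ ^ 2 * _ ≤ _
  nlinarith

theorem norm_prod_mul_starProjection_lt_one_iff (hn : 0 < n) (hP : ∀ i, IsStarProjection (P i)) :
    ‖(List.ofFn P).prod * K.starProjection‖ < 1 ↔ JointlyBoundedBelow P K :=
  ⟨jointlyBoundedBelow_of_norm_prod_mul_starProjection_lt_one hn (fun i => (hP i).norm_le) K,
    norm_prod_mul_starProjection_lt_one K hP⟩

end ProductOfProjections

end InnerProductSpace

section Cosine

variable {H : Type*} [NormedAddCommGroup H] [InnerProductSpace ℂ H] {n : ℕ}

theorem cosine_quotient_eq_one_sub_dispersion_div (hn : 2 ≤ n) {x : Fin n → H} (hx : x ≠ 0) :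
    1 / ((n : ℝ) - 1) * (∑ i, ∑ j ∈ univ.erase i, (inner ℂ (x i) (x j)).re) / ∑ i, ‖x i‖ ^ 2 =
      1 - dispersion ℂ x / (n * (n - 1) * ∑ i, ‖x i‖ ^ 2) := by
  have hD := sum_norm_sq_pos hx
  have hn1 : (n : ℝ) - 1 ≠ 0 := by
    have : (2 : ℝ) ≤ n := by exact_mod_cast hn
    linarith
  have hσ := norm_sum_sq_eq_sum_norm_sq_add (𝕜 := ℂ) x
  have hdisp := dispersion_eq (𝕜 := ℂ) x
  simp only [RCLike.re_to_complex] at hσ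
  rw [Fintype.card_fin] at hdisp
  field_simp
  linear_combination hdisp - (n : ℝ) * hσ

theorem one_sub_dispersion_div_le_cosine (hn : 2 ≤ n) {N : Fin n → Submodule ℂ H}
    {x : Fin n → H} (hx : ∀ i, x i ∈ (N i)ᗮ ⊓ (∑ j, N j).topologicalClosure) (hx0 : x ≠ 0) :
    1 - dispersion ℂ x / (n * (n - 1) * ∑ i, ‖x i‖ ^ 2) ≤ cosine N := by
  have hn1 : (1 : ℝ) < n := by exact_mod_cast hn
  have hk : (0 : ℝ) < n * (n - 1) := by nlinarith
  rw [← cosine_quotient_eq_one_sub_dispersion_div hn hx0]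
  refine le_csSup ⟨1, ?_⟩ ⟨x, hx, hx0, rfl⟩
  rintro _ ⟨y, -, hy0, rfl⟩
  rw [cosine_quotient_eq_one_sub_dispersion_div hn hy0]
  exact sub_le_self _ (div_nonneg (dispersion_nonneg y) (mul_pos hk (sum_norm_sq_pos hy0)).le)

theorem cosine_lt_one_iff_exists_mul_le_dispersion (hn : 2 ≤ n) (N : Fin n → Submodule ℂ H) :
    cosine N < 1 ↔ ∃ c > 0, ∀ x : Fin n → H,
      (∀ i, x i ∈ (N i)ᗮ ⊓ (∑ j, N j).topologicalClosure) →
        c * ∑ i, ‖x i‖ ^ 2 ≤ dispersion ℂ x := by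
  have hn1 : (1 : ℝ) < n := by exact_mod_cast hn
  have hk : (0 : ℝ) < n * (n - 1) := by nlinarith
  constructor
  · intro h
    refine ⟨(1 - cosine N) * (n * (n - 1)), by nlinarith, fun x hx => ?_⟩
    rcases eq_or_ne x 0 with rfl | hx0
    · simpa using dispersion_nonneg (𝕜 := ℂ) (0 : Fin n → H)
    have hle := one_sub_dispersion_div_le_cosine hn hx hx0
    rw [sub_le_comm, le_div_iff₀ (mul_pos hk (sum_norm_sq_pos hx0))] at hle
    linarith
  · rintro ⟨c, hc, h⟩
    have hck : 0 < c / (n * (n - 1)) := by positivity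
    refine (Real.sSup_le (a := max (1 - c / (n * (n - 1))) 0) ?_ (le_max_right _ _)).trans_lt
      (max_lt (sub_lt_self 1 hck) one_pos)
    rintro _ ⟨x, hx, hx0, rfl⟩
    rw [cosine_quotient_eq_one_sub_dispersion_div hn hx0]
    refine le_trans ?_ (le_max_left _ 0)
    refine sub_le_sub_left ?_ 1
    rw [div_le_div_iff₀ hk (mul_pos hk (sum_norm_sq_pos hx0))]
    nlinarith [h x hx]

theorem cosine_lt_one_iff_jointlyBoundedBelow [CompleteSpace H] (hn : 2 ≤ n)
    (N : Fin n → Submodule ℂ H) :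
    cosine N < 1 ↔ JointlyBoundedBelow (fun i => (N i)ᗮ.starProjection)
      (∑ j, N j).topologicalClosure := by
  have hUM : ∀ i, (N i)ᗮᗮ ≤ (∑ j, N j).topologicalClosure := fun i => by
    rw [Submodule.orthogonal_orthogonal_eq_closure]
    exact Submodule.topologicalClosure_mono (single_le_sum (fun j _ => bot_le) (mem_univ i))
  have hn0 : (0 : ℝ) < n := by norm_cast; omega
  rw [cosine_lt_one_iff_exists_mul_le_dispersion hn]
  constructor
  · rintro ⟨c, hc, h⟩
    refine ⟨c * n / (n ^ 2 + c), by positivity, fun z hz => ?_⟩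
    have := mul_norm_sq_le_sum_norm_sub_starProjection_sq hUM h hz
    rw [Fintype.card_fin] at this
    rw [div_mul_eq_mul_div, div_le_iff₀ (by positivity)]
    linarith
  · rintro ⟨δ, hδ, h⟩
    refine ⟨δ * n ^ 2 / (n + δ), by positivity, fun x hx => ?_⟩
    have := mul_sum_norm_sq_le_dispersion h hx
    rw [Fintype.card_fin] at this
    rw [div_mul_eq_mul_div, div_le_iff₀ (by positivity)]
    linarith

end Cosine

theorem stmt_7_general {H : Type*} [NormedAddCommGroup H] [InnerProductSpace ℂ H] [CompleteSpace H]
    {n : ℕ} (hn : 2 ≤ n) (N : Fin n → Submodule ℂ H)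
    (P : Fin n → H →L[ℂ] H)
    (hP : ∀ i, IsSelfAdjoint (P i) ∧ IsIdempotentElem (P i) ∧
      LinearMap.range (P i : H →ₗ[ℂ] H) = (N i)ᗮ)
    (Q : H →L[ℂ] H)
    (hQ : IsSelfAdjoint Q ∧ IsIdempotentElem Q ∧
      LinearMap.range (Q : H →ₗ[ℂ] H) = (∑ j, N j).topologicalClosure) :
    cosine N < 1 ↔ ‖(List.ofFn P).prod * Q‖ < 1 := by
  obtain rfl : P = fun i => (N i)ᗮ.starProjection :=
    funext fun i => IsStarProjection.eq_starProjection_of_range_eq ⟨(hP i).2.1, (hP i).1⟩ (hP i).2.2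
  obtain rfl := IsStarProjection.eq_starProjection_of_range_eq ⟨hQ.2.1, hQ.1⟩ hQ.2.2
  rw [cosine_lt_one_iff_jointlyBoundedBelow hn,
    norm_prod_mul_starProjection_lt_one_iff _ (by omega) fun i => isStarProjection_starProjection]

/-- For `n ≥ 2` closed subspaces `N i` with `P i` the orthogonal projection
onto `(N i)ᗮ` and `Q` the orthogonal projection onto the closure `N` of `N₁ + ⋯ + Nₙ`:
`c(N₁,…,Nₙ) < 1 ↔ ‖P₁ P₂ ⋯ Pₙ Q‖ < 1`. -/
theorem stmt_7 {H : Type*} [NormedAddCommGroup H] [InnerProductSpace ℂ H] [CompleteSpace H]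
    {n : ℕ} (hn : 2 ≤ n) (N : Fin n → Submodule ℂ H)
    (hNc : ∀ i, IsClosed ((N i : Set H)))
    (P : Fin n → H →L[ℂ] H)
    (hP : ∀ i, IsSelfAdjoint (P i) ∧ IsIdempotentElem (P i) ∧
      LinearMap.range (P i : H →ₗ[ℂ] H) = (N i)ᗮ)
    (Q : H →L[ℂ] H)
    (hQ : IsSelfAdjoint Q ∧ IsIdempotentElem Q ∧
      LinearMap.range (Q : H →ₗ[ℂ] H) = (∑ j, N j).topologicalClosure) :
    cosine N < 1 ↔ ‖(List.ofFn P).prod * Q‖ < 1 :=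
  stmt_7_general hn N P hP Q hQ
end
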